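/- Every infinite branch avoiding Solovay's bar encodes the jump: with α, T as below, define ρ : List ℕ → ℕ by ρ s = 0 iff there exists j < s.length such that either j = 2*k and s.get j ≠ α k, or j = 2*k+1 and s.get j = 0 and ∃ y ≤ s.length, T k y, or j = 2*k+1 and s.get j = m+1 and m is not the least y with T k y; otherwise ρ s = 1. Then for any γ : ℕ → ℕ with ρ ([γ 0, ..., γ (n-1)]) ≠ 0 for all n, we have: γ (2*n) = α n, and γ (2*n+1) > 0 ↔ ∃ y, T n y, and if γ (2*n+1) = m+1 then m is the least y with T n y. -/

import Mathlib

/-- The initial segment `[γ 0, ..., γ (n-1)]` of `γ` of length `n`. -/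
def seg (γ : ℕ → ℕ) (n : ℕ) : List ℕ := (List.range n).map γ

/-- `m` is the least `y` with `T k y`. -/
def IsLeastWitness (T : ℕ → ℕ → Prop) (k m : ℕ) : Prop :=
  T k m ∧ ∀ y, T k y → m ≤ y

/-- Solovay's bar: `rho α T s = 0` iff some entry of `s` violates the
jump-encoding conditions; otherwise `rho α T s = 1`. -/
noncomputable def rho (α : ℕ → ℕ) (T : ℕ → ℕ → Prop) (s : List ℕ) : ℕ := by
  classical
  exact if (∃ j : Fin s.length,
      (∃ k, (j : ℕ) = 2*k ∧ s.get j ≠ α k) ∨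
      (∃ k, (j : ℕ) = 2*k+1 ∧ s.get j = 0 ∧ ∃ y ≤ s.length, T k y) ∨
      (∃ k m, (j : ℕ) = 2*k+1 ∧ s.get j = m+1 ∧ ¬ IsLeastWitness T k m))
    then 0 else 1

/-- `s` is a correct initial segment of the jump-encoding `β`. -/
def Good (α : ℕ → ℕ) (T : ℕ → ℕ → Prop) (s : List ℕ) : Prop :=
  ∀ j : Fin s.length,
    (∀ k, (j : ℕ) = 2*k → s.get j = α k) ∧
    (∀ k, (j : ℕ) = 2*k+1 →
      (s.get j > 0 ↔ ∃ y, T k y) ∧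
      ∀ m, s.get j = m+1 → IsLeastWitness T k m)

/-! Each clause is read off from a single initial segment of `γ`, which avoids the bar: one that
contains the entry in question and, for the existence clause, is long enough to cover the witness
`y` too, since the bar only inspects witnesses `y ≤ s.length`. -/

@[simp]
theorem seg_length (γ : ℕ → ℕ) (n : ℕ) : (seg γ n).length = n := by
  simp [seg]

@[simp]
theorem seg_getElem (γ : ℕ → ℕ) {n j : ℕ} (h : j < (seg γ n).length) : (seg γ n)[j] = γ j := by
  simp [seg]

section RhoNeZero

variable {α : ℕ → ℕ} {T : ℕ → ℕ → Prop} {s : List ℕ}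

theorem not_exists_violation_of_rho_ne_zero (hs : rho α T s ≠ 0) :
    ¬ ∃ j : Fin s.length,
      (∃ k, (j : ℕ) = 2*k ∧ s.get j ≠ α k) ∨
      (∃ k, (j : ℕ) = 2*k+1 ∧ s.get j = 0 ∧ ∃ y ≤ s.length, T k y) ∨
      (∃ k m, (j : ℕ) = 2*k+1 ∧ s.get j = m+1 ∧ ¬ IsLeastWitness T k m) := by
  intro h
  classical
  exact hs (if_pos h)

theorem getElem_two_mul_of_rho_ne_zero (hs : rho α T s ≠ 0) {k : ℕ} (hk : 2*k < s.length) :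
    s[2*k] = α k := by
  by_contra hne
  exact not_exists_violation_of_rho_ne_zero hs ⟨⟨2*k, hk⟩, .inl ⟨k, rfl, hne⟩⟩

theorem isLeastWitness_of_rho_ne_zero (hs : rho α T s ≠ 0) {k m : ℕ} (hk : 2*k+1 < s.length)
    (hm : s[2*k+1] = m+1) : IsLeastWitness T k m := by
  by_contra hnot
  exact not_exists_violation_of_rho_ne_zero hs ⟨⟨2*k+1, hk⟩, .inr (.inr ⟨k, m, rfl, hm, hnot⟩)⟩

theorem getElem_two_mul_add_one_pos_of_rho_ne_zero (hs : rho α T s ≠ 0) {k y : ℕ}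
    (hk : 2*k+1 < s.length) (hy : y ≤ s.length) (hT : T k y) : 0 < s[2*k+1] := by
  by_contra hzero
  exact not_exists_violation_of_rho_ne_zero hs
    ⟨⟨2*k+1, hk⟩, .inr (.inl ⟨k, rfl, Nat.eq_zero_of_not_pos hzero, y, hy, hT⟩)⟩

end RhoNeZero

theorem branch_encodes_jump_general (α : ℕ → ℕ) (T : ℕ → ℕ → Prop)
    (γ : ℕ → ℕ)
    (hγ : ∀ n, rho α T (seg γ n) ≠ 0) :
    (∀ n, γ (2*n) = α n) ∧
    (∀ n, γ (2*n+1) > 0 ↔ ∃ y, T n y) ∧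
    (∀ n m, γ (2*n+1) = m+1 → IsLeastWitness T n m) := by
  have hleast : ∀ n m, γ (2*n+1) = m+1 → IsLeastWitness T n m := fun n m hm =>
    isLeastWitness_of_rho_ne_zero (hγ (2*n+2)) (k := n) (by simp) (by simpa using hm)
  refine ⟨fun n => ?_, fun n => ⟨fun hpos => ?_, fun ⟨y, hy⟩ => ?_⟩, hleast⟩
  · simpa using getElem_two_mul_of_rho_ne_zero (hγ (2*n+1)) (k := n) (by simp)
  · obtain ⟨m, hm⟩ := Nat.exists_eq_add_one.mpr hpos
    exact ⟨m, (hleast n m hm).1⟩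
  · have hpos := getElem_two_mul_add_one_pos_of_rho_ne_zero (hγ (2*n+2+y))
      (by simp only [seg_length]; omega) (by simp) hy
    rwa [seg_getElem] at hpos

/-- Every infinite branch avoiding Solovay's bar encodes the jump. -/
theorem branch_encodes_jump (α : ℕ → ℕ) (T : ℕ → ℕ → Prop)
    (hT : ∀ n, DecidablePred (T n)) (γ : ℕ → ℕ)
    (hγ : ∀ n, rho α T (seg γ n) ≠ 0) :
    (∀ n, γ (2*n) = α n) ∧
    (∀ n, γ (2*n+1) > 0 ↔ ∃ y, T n y) ∧
    (∀ n m, γ (2*n+1) = m+1 → IsLeastWitness T n m) :=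
  branch_encodes_jump_general α T γ hγ
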